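/- Let x, y be primitive cyclically reduced words generating distinct cyclic subgroups with ⟨x⟩ ∩ ⟨y⟩ = {1}, and suppose |x| ≤ |y|. If c is a common prefix of x^n and y^n and y contains no subword of the form x'^τ for any cyclic shift x' of x (where τ ≥ 2 is fixed), then |c| < min{2|y|, (τ+1)|x|}. -/

import Mathlib

/-- `n`-fold concatenation of a word with itself. -/
def wpow {α : Type*} (w : List α) (n : ℕ) : List α := (List.replicate n w).flatten

/-- A word is primitive if it is not a proper power. -/
def PrimitiveWord {α : Type*} (w : List α) : Prop :=
  ∀ (v : List α) (k : ℕ), w = wpow v k → k = 1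

/-- A word is reduced if no adjacent pair of letters cancels. -/
def Reduced {α : Type*} (w : List (α × Bool)) : Prop :=
  List.Chain' (fun a b => ¬(b.1 = a.1 ∧ b.2 = !a.2)) w

/-- A word is cyclically reduced if every cyclic shift of it is reduced. -/
def CycReduced {α : Type*} (w : List (α × Bool)) : Prop :=
  ∀ u v : List (α × Bool), w = u ++ v → Reduced (v ++ u)

/-!
If a common prefix `c` of powers of `x` and of `y` has length at least `|x| + |y|`, then `c`
has both periods `|x|` and `|y|`, so reading its first `|x| + |y|` letters in two ways gives
`xy = yx`; commuting words are powers of a common word, and two primitive ones coincide.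
Hence `|c| < |x| + |y| ≤ 2|y|`. If moreover `|c| ≥ (τ + 1)|x|`, then `|y| > τ|x|`, so `x^τ`,
a prefix of `c` and thus of `y^n`, is already a prefix of `y`, which `y` was assumed not to
contain.
-/

open List

section Powers

variable {α : Type*}

lemma wpow_one (w : List α) : wpow w 1 = w := by
  simp [wpow]

lemma wpow_add (w : List α) (a b : ℕ) : wpow w (a + b) = wpow w a ++ wpow w b := by
  simp only [wpow, replicate_add, flatten_append]

lemma wpow_succ (w : List α) (n : ℕ) : wpow w (n + 1) = w ++ wpow w n := by
  rw [add_comm, wpow_add, wpow_one]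

lemma length_wpow (w : List α) (n : ℕ) : (wpow w n).length = n * w.length := by
  simp [wpow]

lemma wpow_prefix_wpow (w : List α) {m n : ℕ} (h : m ≤ n) : wpow w m <+: wpow w n := by
  obtain ⟨k, rfl⟩ := Nat.exists_eq_add_of_le h
  rw [wpow_add]
  exact prefix_append _ _

lemma wpow_prefix_of_prefix_wpow {w c : List α} {m n : ℕ} (hc : c <+: wpow w n)
    (hlen : m * w.length ≤ c.length) : wpow w m <+: c := by
  rw [← length_wpow] at hlen
  rcases le_total m n with h | h
  · exact prefix_of_prefix_length_le (wpow_prefix_wpow w h) hc hlen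
  · exact prefix_of_prefix_length_le (prefix_refl _) (hc.trans (wpow_prefix_wpow w h)) hlen

lemma prefix_wpow_of_prefix_wpow {w a : List α} {m n : ℕ} (ha : a <+: wpow w n)
    (hlen : a.length ≤ m * w.length) : a <+: wpow w m := by
  rw [← length_wpow] at hlen
  rcases le_total m n with h | h
  · exact prefix_of_prefix_length_le ha (wpow_prefix_wpow w h) hlen
  · exact ha.trans (wpow_prefix_wpow w h)

end Powers

section Periodicity

variable {α : Type*} {x y c : List α}

/-- `c <+: x ++ c` says that `c` has period `|x|` and begins with `x` (when `|x| ≤ |c|`). -/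
lemma prefix_append_of_prefix_wpow {n : ℕ} (hc : c <+: wpow x n) : c <+: x ++ c := by
  have hc' : c <+: x ++ wpow x n := wpow_succ x n ▸ hc.trans (wpow_prefix_wpow x n.le_succ)
  exact prefix_of_prefix_length_le hc' ((prefix_append_right_inj x).2 hc) (by simp)

lemma append_comm_of_prefix_append (hx : c <+: x ++ c) (hy : c <+: y ++ c)
    (hlen : x.length + y.length ≤ c.length) : x ++ y = y ++ x := by
  have hxc : x <+: c := prefix_of_prefix_length_le (prefix_append x c) hx (by omega)
  have hyc : y <+: c := prefix_of_prefix_length_le (prefix_append y c) hy (by omega)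
  have hxy : x ++ y <+: c :=
    prefix_of_prefix_length_le ((prefix_append_right_inj x).2 hyc) hx (by rw [length_append]; omega)
  have hyx : y ++ x <+: c :=
    prefix_of_prefix_length_le ((prefix_append_right_inj y).2 hxc) hy (by rw [length_append]; omega)
  have hlen' : (x ++ y).length = (y ++ x).length := by simp only [length_append]; omega
  exact (prefix_of_prefix_length_le hxy hyx hlen'.le).eq_of_length hlen'

end Periodicity

lemma exists_eq_wpow_of_append_comm {α : Type*} {x y : List α} (h : x ++ y = y ++ x) :
    ∃ (w : List α) (i j : ℕ), x = wpow w i ∧ y = wpow w j := by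
  induction hN : x.length + y.length using Nat.strong_induction_on generalizing x y with
  | _ N ih =>
  wlog hle : x.length ≤ y.length generalizing x y
  · obtain ⟨w, i, j, hy, hx⟩ := this h.symm (by omega) (by omega)
    exact ⟨w, j, i, hx, hy⟩
  obtain ⟨z, rfl⟩ : x <+: y :=
    prefix_of_prefix_length_le (prefix_append x y) (h ▸ prefix_append y x) hle
  have hxz : x ++ z = z ++ x := by simpa using h
  rcases eq_or_ne x [] with rfl | hx
  · exact ⟨z, 0, 1, rfl, (wpow_one z).symm⟩
  obtain ⟨w, i, j, rfl, rfl⟩ :=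
    ih _ (by simp only [length_append] at hN; have := length_pos_of_ne_nil hx; omega) hxz rfl
  exact ⟨w, i, i + j, rfl, (wpow_add w i j).symm⟩

namespace PrimitiveWord

variable {α : Type*} {x y : List α}

lemma eq_of_append_comm (hx : PrimitiveWord x) (hy : PrimitiveWord y)
    (h : x ++ y = y ++ x) : x = y := by
  obtain ⟨w, i, j, hi, hj⟩ := exists_eq_wpow_of_append_comm h
  rw [hi, hj, hx w i hi, hy w j hj]

lemma length_lt_of_prefix_wpow (hx : PrimitiveWord x) (hy : PrimitiveWord y) (hxy : x ≠ y)
    {c : List α} {m n : ℕ} (hcx : c <+: wpow x m) (hcy : c <+: wpow y n) :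
    c.length < x.length + y.length := by
  by_contra! hlen
  exact hxy <| hx.eq_of_append_comm hy <| append_comm_of_prefix_append
    (prefix_append_of_prefix_wpow hcx) (prefix_append_of_prefix_wpow hcy) hlen

end PrimitiveWord

theorem common_prefix_bound_general {α : Type*} (x y c : List (α × Bool)) (τ n : ℕ)
    (hx : PrimitiveWord x) (hy : PrimitiveWord y)
    (hdist : Subgroup.zpowers (FreeGroup.mk x) ≠ Subgroup.zpowers (FreeGroup.mk y))
    (hlen : x.length ≤ y.length)
    (hpx : c <+: wpow x n) (hpy : c <+: wpow y n)
    (hno : ∀ p q : List (α × Bool), x = p ++ q → ¬ (wpow (q ++ p) τ <:+: y)) :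
    c.length < min (2 * y.length) ((τ + 1) * x.length) := by
  have hxy : x ≠ y := by rintro rfl; exact hdist rfl
  have hc := hx.length_lt_of_prefix_wpow hy hxy hpx hpy
  refine lt_min (by omega) (not_le.1 fun hge => ?_)
  rw [add_mul, one_mul] at hge
  have hxτc : wpow x τ <+: c := wpow_prefix_of_prefix_wpow hpx (by omega)
  have hxτy : wpow x τ <+: wpow y 1 :=
    prefix_wpow_of_prefix_wpow (hxτc.trans hpy) (by rw [length_wpow]; omega)
  exact hno [] x rfl (by simpa [wpow_one] using hxτy.isInfix)

/-- Common-prefix bound for powers of `x` and `y` when `y` contains no `τ`-th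
power of a cyclic shift of `x`. -/
theorem common_prefix_bound {α : Type*} (x y c : List (α × Bool)) (τ n : ℕ)
    (hτ : 2 ≤ τ)
    (hx : PrimitiveWord x) (hy : PrimitiveWord y)
    (hcx : CycReduced x) (hcy : CycReduced y)
    (hdist : Subgroup.zpowers (FreeGroup.mk x) ≠ Subgroup.zpowers (FreeGroup.mk y))
    (hint : Subgroup.zpowers (FreeGroup.mk x) ⊓ Subgroup.zpowers (FreeGroup.mk y) = ⊥)
    (hlen : x.length ≤ y.length)
    (hpx : c <+: wpow x n) (hpy : c <+: wpow y n)
    (hno : ∀ p q : List (α × Bool), x = p ++ q → ¬ (wpow (q ++ p) τ <:+: y)) :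
    c.length < min (2 * y.length) ((τ + 1) * x.length) :=
  common_prefix_bound_general x y c τ n hx hy hdist hlen hpx hpy hno
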